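/- arXiv:2001.00543 — 3 statements merged into one kernel-verified Lean document; each statement's English description precedes it below -/
import Mathlib

section
/- Let m₁, m₂, …, m_k be positive integers and define partial sums M_ℓ = m₁ + ⋯ + m_ℓ for ℓ ∈ [k]. Then the sum ∑_{ℓ=1}^k m_ℓ/√(M_ℓ) is at most √(M_k · (1 + ln M_k)). -/
/-!
By Cauchy–Schwarz applied to `√m_ℓ · (√m_ℓ / √M_ℓ)`, the sum is at most
`√(M_k · ∑ m_ℓ / M_ℓ)`. Each term `m_ℓ / M_ℓ = 1 - M_{ℓ-1} / M_ℓ` is at most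
`log M_ℓ - log M_{ℓ-1}` once `M_{ℓ-1} > 0`, and the first nonzero term equals `1`, so the sum
telescopes to at most `1 + log M_k`.
-/

open Finset Real

theorem div_add_le_log_sub_log {x a : ℝ} (hx : 0 < x) (ha : 0 ≤ a) :
    a / (x + a) ≤ log (x + a) - log x := by
  have hxa : 0 < x + a := by positivity
  have h := one_sub_inv_le_log_of_pos (div_pos hxa hx)
  rwa [log_div hxa.ne' hx.ne', inv_div, one_sub_div hxa.ne', add_sub_cancel_left] at h

theorem sum_div_sqrt_le_sqrt_mul {ι : Type*} (s : Finset ι) {a b : ι → ℝ}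
    (ha : ∀ i, 0 ≤ a i) (hb : ∀ i, 0 ≤ b i) :
    ∑ i ∈ s, a i / √(b i) ≤ √((∑ i ∈ s, a i) * ∑ i ∈ s, a i / b i) := by
  have hterm : ∀ i, a i / √(b i) = √(a i) * √(a i / b i) := fun i => by
    rw [sqrt_div' _ (hb i), mul_div_assoc', mul_self_sqrt (ha i)]
  simp_rw [hterm]
  rw [sqrt_mul (sum_nonneg fun i _ => ha i)]
  exact sum_sqrt_mul_sqrt_le s ha fun i => div_nonneg (ha i) (hb i)

/-- Its increments dominate the terms `m_ℓ / M_ℓ`, including the one where `M` first becomes positive. -/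
noncomputable def logPotential (n : ℕ) : ℝ :=
  if n = 0 then 0 else 1 + log n

theorem logPotential_le_one_add_log (n : ℕ) : logPotential n ≤ 1 + log n := by
  unfold logPotential
  split_ifs with hn
  · simp [hn]
  · rfl

theorem div_add_le_logPotential_sub (A a : ℕ) :
    (a : ℝ) / (A + a) ≤ logPotential (A + a) - logPotential A := by
  rcases Nat.eq_zero_or_pos A with rfl | hA
  · rcases Nat.eq_zero_or_pos a with rfl | ha
    · simp [logPotential]
    · have ha' : (1 : ℝ) ≤ a := by exact_mod_cast ha
      simp only [logPotential, Nat.cast_zero, zero_add, if_pos, ha.ne', if_false, sub_zero]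
      rw [div_self (by positivity)]
      linarith [log_nonneg ha']
  · have hAa : A + a ≠ 0 := by omega
    simp only [logPotential, hAa, hA.ne', if_false, Nat.cast_add]
    linarith [div_add_le_log_sub_log (x := (A : ℝ)) (by exact_mod_cast hA) a.cast_nonneg]

theorem sum_div_partialSum_le_logPotential (k : ℕ) (m : ℕ → ℕ) :
    ∑ ℓ ∈ Icc 1 k, (m ℓ : ℝ) / ((∑ i ∈ Icc 1 ℓ, m i : ℕ) : ℝ) ≤
      logPotential (∑ i ∈ Icc 1 k, m i) := by
  induction k with
  | zero => simp [logPotential]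
  | succ k ih =>
    rw [sum_Icc_succ_top (by omega), sum_Icc_succ_top (by omega), Nat.cast_add]
    linarith [div_add_le_logPotential_sub (∑ i ∈ Icc 1 k, m i) (m (k + 1))]

theorem sum_ratio_sqrt_bound_general (k : ℕ) (m : ℕ → ℕ) :
    (∑ ℓ ∈ Finset.Icc 1 k,
        (m ℓ : ℝ) / Real.sqrt (∑ i ∈ Finset.Icc 1 ℓ, (m i : ℝ))) ≤
      Real.sqrt ((∑ i ∈ Finset.Icc 1 k, (m i : ℝ)) *
        (1 + Real.log (∑ i ∈ Finset.Icc 1 k, (m i : ℝ)))) := by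
  have hlog : ∑ ℓ ∈ Icc 1 k, (m ℓ : ℝ) / ∑ i ∈ Icc 1 ℓ, (m i : ℝ) ≤
      1 + log (∑ i ∈ Icc 1 k, (m i : ℝ)) := by
    have := (sum_div_partialSum_le_logPotential k m).trans (logPotential_le_one_add_log _)
    simpa only [Nat.cast_sum] using this
  calc _ ≤ √((∑ i ∈ Icc 1 k, (m i : ℝ)) * ∑ ℓ ∈ Icc 1 k, (m ℓ : ℝ) / ∑ i ∈ Icc 1 ℓ, (m i : ℝ)) :=
        sum_div_sqrt_le_sqrt_mul _ (fun i => (m i).cast_nonneg) fun ℓ => by positivity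
    _ ≤ _ := sqrt_le_sqrt (mul_le_mul_of_nonneg_left hlog (by positivity))

theorem sum_ratio_sqrt_bound (k : ℕ) (m : ℕ → ℕ) (hm : ∀ ℓ ∈ Finset.Icc 1 k, 0 < m ℓ) :
    (∑ ℓ ∈ Finset.Icc 1 k,
        (m ℓ : ℝ) / Real.sqrt (∑ i ∈ Finset.Icc 1 ℓ, (m i : ℝ))) ≤
      Real.sqrt ((∑ i ∈ Finset.Icc 1 k, (m i : ℝ)) *
        (1 + Real.log (∑ i ∈ Finset.Icc 1 k, (m i : ℝ)))) :=
  sum_ratio_sqrt_bound_general k m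
end

section
/- Let X be a real-valued random variable taking values in the integers with probability mass function p, and let p_max = sup_i p(i). Then |P(X ≤ 0) - E[1/(1 + e^X)]| ≤ (2e/(e-1))·p_max. -/
/-!
Write `P(X ≤ 0) - E[1/(1 + e^X)]` as `∑ p i k i` with `k i = [i ≤ 0] - 1/(1 + e^i)`.
For `i ≤ 0` this is `e^i/(1 + e^i) ≤ e^i`, for `i > 0` it is `-1/(1 + e^i)` with modulus
`≤ e^{-i}`, so `|k i| ≤ e^{-|i|}`. Hence the difference is at most
`p_max ∑_{i ∈ ℤ} e^{-|i|} = p_max (e + 1)/(e - 1) ≤ p_max · 2e/(e - 1)`.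
-/

open Real

lemma hasSum_pow_natAbs {r : ℝ} (hr : |r| < 1) :
    HasSum (fun n : ℤ => r ^ n.natAbs) ((1 + r) / (1 - r)) := by
  have hgeo := hasSum_geometric_of_abs_lt_one hr
  have hr1 : 1 - r ≠ 0 := by linarith [le_abs_self r]
  have h := HasSum.of_nat_of_neg (f := fun n : ℤ => r ^ n.natAbs)
    (by simpa using hgeo) (by simpa using hgeo)
  rwa [show (1 - r)⁻¹ + (1 - r)⁻¹ - r ^ Int.natAbs 0 = (1 + r) / (1 - r) by
    field_simp; ring] at h

lemma abs_tsum_mul_le_of_abs_le {ι : Type*} {p k w : ι → ℝ} {a pmax : ℝ} (hw : HasSum w a)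
    (hp : ∀ i, 0 ≤ p i) (hmax : ∀ i, p i ≤ pmax) (hk : ∀ i, |k i| ≤ w i) :
    |∑' i, p i * k i| ≤ pmax * a :=
  tsum_of_norm_bounded (f := fun i => p i * k i) (hw.mul_left pmax) fun i => by
    rw [norm_eq_abs, abs_mul, abs_of_nonneg (hp i)]
    exact mul_le_mul (hmax i) (hk i) (abs_nonneg _) ((hp i).trans (hmax i))

lemma abs_ite_nonpos_sub_inv_one_add_exp_le (x : ℝ) :
    |(if x ≤ 0 then 1 else 0) - (1 + exp x)⁻¹| ≤ exp (-|x|) := by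
  have hx0 := exp_pos x
  split_ifs with hx
  · have : 1 - (1 + exp x)⁻¹ = exp x / (1 + exp x) := by field_simp; ring
    rw [abs_of_nonpos hx, neg_neg, this, abs_of_pos (by positivity)]
    exact div_le_self hx0.le (by linarith)
  · rw [abs_of_pos (not_le.1 hx), zero_sub, abs_neg, abs_of_pos (by positivity), exp_neg]
    exact inv_anti₀ hx0 (by linarith)

lemma exp_neg_abs_intCast (n : ℤ) : exp (-|(n : ℝ)|) = exp (-1) ^ n.natAbs := by
  rw [← exp_nat_mul, Nat.cast_natAbs, Int.cast_abs]
  ring_nf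

lemma one_add_exp_neg_one_div_le :
    (1 + exp (-1)) / (1 - exp (-1)) ≤ 2 * exp 1 / (exp 1 - 1) := by
  have he : 1 < exp 1 := one_lt_exp_iff.2 one_pos
  rw [exp_neg, div_le_div_iff₀ (by linarith [inv_lt_one_of_one_lt₀ he]) (by linarith)]
  field_simp
  nlinarith

theorem pmf_abs_bound (p : ℤ → ℝ) (hp : ∀ i, 0 ≤ p i) (hsum : HasSum p 1)
    (pmax : ℝ) (hmax : ∀ i, p i ≤ pmax) :
    |(∑' i : ℤ, if i ≤ 0 then p i else 0) - ∑' i : ℤ, p i / (1 + Real.exp i)| ≤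
      (2 * Real.exp 1 / (Real.exp 1 - 1)) * pmax := by
  have hr : |exp (-1)| < 1 := by rw [abs_of_pos (exp_pos _), exp_lt_one_iff]; norm_num
  have hind : Summable fun i : ℤ => if i ≤ 0 then p i else 0 :=
    (hsum.summable.indicator {i | i ≤ 0}).congr fun i => by simp [Set.indicator_apply]
  have hlogistic : Summable fun i : ℤ => p i / (1 + exp i) :=
    hsum.summable.of_nonneg_of_le (fun i => div_nonneg (hp i) (by positivity))
      (fun i => div_le_self (hp i) (by linarith [exp_pos (i : ℝ)]))
  have hdiff : ∀ i : ℤ, ((if i ≤ 0 then p i else 0) - p i / (1 + exp i)) =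
      p i * ((if (i : ℝ) ≤ 0 then 1 else 0) - (1 + exp i)⁻¹) := by
    intro i
    simp only [Int.cast_nonpos]
    split_ifs <;> ring
  calc _ = |∑' i : ℤ, p i * ((if (i : ℝ) ≤ 0 then 1 else 0) - (1 + exp i)⁻¹)| := by
        rw [← hind.tsum_sub hlogistic]; simp only [hdiff]
    _ ≤ pmax * ((1 + exp (-1)) / (1 - exp (-1))) :=
        abs_tsum_mul_le_of_abs_le (hasSum_pow_natAbs hr) hp hmax fun i =>
          exp_neg_abs_intCast i ▸ abs_ite_nonpos_sub_inv_one_add_exp_le i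
    _ ≤ _ := by
        rw [mul_comm]
        exact mul_le_mul_of_nonneg_right one_add_exp_neg_one_div_le ((hp 0).trans (hmax 0))
end

section
/- Fix μ ∈ (0,1), ε ∈ (0,1), a natural number n, and ρ ∈ (0,1]. Let Z ∼ Bin(n, μ). If the adversary follows the false policy (lying at every stage) with initial relative weight ρ and absolute loss Q(y) = y, the expected aggregate loss equals n(1-μ) + ∑_{j=0}^{n} P(Z > j) · g^(j)(ρ), where g^(j)(ρ) = 1/(1 + (1/ρ - 1)/ε^j). -/
/-!
The iterates of `g` compose additively, `g^(k)(g^(j)(ρ)) = g^(k+j)(ρ)`. By induction on `n`,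
`V_n(ρ) = n(1-μ) + E[∑_{j<Z} g^(j)(ρ)]` with `Z ∼ Bin(n, μ)`: the inductive step is Pascal's rule
`E_{n+1}[h(Z)] = μ E_n[h(Z+1)] + (1-μ) E_n[h(Z)]` together with
`∑_{j<i+1} g^(j)(ρ) = ρ + ∑_{j<i} g^(j)(g(ρ))`. Exchanging the two sums turns
`E[∑_{j<Z} g^(j)(ρ)]` into `∑_j P(Z > j) g^(j)(ρ)`.
-/

open Finset

section BinomialExpectation

variable {R : Type*} [CommRing R] (μ : R)

/-- `E[h(Z)]` for `Z ∼ Bin(n, μ)`, as a polynomial expression in `μ`. -/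
def binomialExpectation (n : ℕ) (h : ℕ → R) : R :=
  ∑ i ∈ range (n + 1), (n.choose i : R) * μ ^ i * (1 - μ) ^ (n - i) * h i

theorem binomialExpectation_zero (h : ℕ → R) : binomialExpectation μ 0 h = h 0 := by
  simp [binomialExpectation]

theorem sum_choose_mul_pow_mul_one_sub_pow (n : ℕ) :
    ∑ i ∈ range (n + 1), (n.choose i : R) * μ ^ i * (1 - μ) ^ (n - i) = 1 := by
  have binomial := add_pow μ (1 - μ) n
  rw [add_sub_cancel, one_pow] at binomial
  exact (sum_congr rfl fun i _ ↦ by ring).trans binomial.symm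

theorem binomialExpectation_const_add (n : ℕ) (c : R) (h : ℕ → R) :
    binomialExpectation μ n (fun i ↦ c + h i) = c + binomialExpectation μ n h := by
  simp only [binomialExpectation, mul_add, sum_add_distrib, ← sum_mul,
    sum_choose_mul_pow_mul_one_sub_pow, one_mul]

theorem binomialExpectation_succ (n : ℕ) (h : ℕ → R) :
    binomialExpectation μ (n + 1) h =
      μ * binomialExpectation μ n (fun i ↦ h (i + 1)) + (1 - μ) * binomialExpectation μ n h := by
  have pascal := sum_choose_succ_mul (R := R) (fun i k ↦ μ ^ i * (1 - μ) ^ k * h i) n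
  simp only [binomialExpectation, mul_sum, mul_assoc] at pascal ⊢
  rw [pascal, add_comm]
  congr 1
  · exact sum_congr rfl fun i _ ↦ by ring
  · refine sum_congr rfl fun i hi ↦ ?_
    rw [Nat.sub_add_comm (Nat.lt_succ_iff.mp (mem_range.mp hi)), pow_succ]
    ring

end BinomialExpectation

theorem sum_range_sum_Ioc_mul {R : Type*} [CommSemiring R] (n : ℕ) (b f : ℕ → R) :
    ∑ j ∈ range (n + 1), (∑ i ∈ Ioc j n, b i) * f j =
      ∑ i ∈ range (n + 1), b i * ∑ j ∈ range i, f j := by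
  simp only [sum_mul, mul_sum]
  refine sum_comm' fun j i ↦ ?_
  simp only [mem_range, mem_Ioc]
  omega

section AdversaryWeight

variable {K : Type*} [Field K] (ε ρ : K)

/-- The closed form of `g^(j)(ρ)`, the `j`-th iterate of `g ρ = 1 / (1 + (1/ρ - 1) / ε)`. -/
noncomputable def adversaryWeight (j : ℕ) : K :=
  1 / (1 + (1 / ρ - 1) / ε ^ j)

@[simp]
theorem adversaryWeight_zero : adversaryWeight ε ρ 0 = ρ := by
  simp [adversaryWeight]

theorem adversaryWeight_adversaryWeight (k j : ℕ) :
    adversaryWeight ε (adversaryWeight ε ρ k) j = adversaryWeight ε ρ (k + j) := by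
  simp only [adversaryWeight, one_div_one_div, add_sub_cancel_left, div_div, pow_add]

end AdversaryWeight

theorem adversaryWeight_mem_Ioc {ε ρ : ℝ} (hε : 0 < ε) (hρ : ρ ∈ Set.Ioc 0 1) (j : ℕ) :
    adversaryWeight ε ρ j ∈ Set.Ioc 0 1 := by
  obtain ⟨hρ0, hρ1⟩ := hρ
  have hexcess : 0 ≤ (1 / ρ - 1) / ε ^ j :=
    div_nonneg (sub_nonneg.mpr (one_le_one_div hρ0 hρ1)) (pow_nonneg hε.le j)
  exact ⟨by unfold adversaryWeight; positivity, div_le_one_of_le₀ (by linarith) (by linarith)⟩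

theorem false_policy_loss_general (μ ε : ℝ) (hε : ε ∈ Set.Ioo (0:ℝ) 1)
    (V : ℕ → ℝ → ℝ)
    (hV0 : ∀ ρ ∈ Set.Ioc (0:ℝ) 1, V 0 ρ = 0)
    (hVs : ∀ n, ∀ ρ ∈ Set.Ioc (0:ℝ) 1,
      V (n+1) ρ = μ * (ρ + V n (1 / (1 + (1/ρ - 1) / ε)))
        + (1 - μ) * (1 + V n ρ))
    (n : ℕ) (ρ : ℝ) (hρ : ρ ∈ Set.Ioc (0:ℝ) 1) :
    V n ρ = n * (1 - μ)
      + ∑ j ∈ Finset.range (n+1),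
          (∑ i ∈ Finset.Ioc j n, (n.choose i : ℝ) * μ ^ i * (1 - μ) ^ (n - i))
            * (1 / (1 + (1/ρ - 1) / ε ^ j)) := by
  have loss_eq : ∀ n, ∀ ρ ∈ Set.Ioc (0:ℝ) 1, V n ρ = n * (1 - μ) +
      binomialExpectation μ n (fun i ↦ ∑ j ∈ range i, adversaryWeight ε ρ j) := by
    intro n
    induction n with
    | zero => simp +contextual [hV0, binomialExpectation_zero]
    | succ n ih =>
      intro ρ hρ
      have partial_sum_succ : ∀ i, ∑ j ∈ range (i + 1), adversaryWeight ε ρ j =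
          ρ + ∑ j ∈ range i, adversaryWeight ε (adversaryWeight ε ρ 1) j := by
        simp [sum_range_succ', adversaryWeight_adversaryWeight, add_comm]
      have hg : 1 / (1 + (1 / ρ - 1) / ε) = adversaryWeight ε ρ 1 := by simp [adversaryWeight]
      rw [hVs n ρ hρ, hg, ih ρ hρ, ih _ (adversaryWeight_mem_Ioc hε.1 hρ 1),
        binomialExpectation_succ, funext partial_sum_succ, binomialExpectation_const_add]
      push_cast
      ring
  rw [loss_eq n ρ hρ, binomialExpectation, sum_range_sum_Ioc_mul]
  simp only [adversaryWeight, mul_assoc]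

theorem false_policy_loss (μ ε : ℝ) (hμ : μ ∈ Set.Ioo (0:ℝ) 1) (hε : ε ∈ Set.Ioo (0:ℝ) 1)
    (V : ℕ → ℝ → ℝ)
    (hV0 : ∀ ρ ∈ Set.Ioc (0:ℝ) 1, V 0 ρ = 0)
    (hVs : ∀ n, ∀ ρ ∈ Set.Ioc (0:ℝ) 1,
      V (n+1) ρ = μ * (ρ + V n (1 / (1 + (1/ρ - 1) / ε)))
        + (1 - μ) * (1 + V n ρ))
    (n : ℕ) (ρ : ℝ) (hρ : ρ ∈ Set.Ioc (0:ℝ) 1) :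
    V n ρ = n * (1 - μ)
      + ∑ j ∈ Finset.range (n+1),
          (∑ i ∈ Finset.Ioc j n, (n.choose i : ℝ) * μ ^ i * (1 - μ) ^ (n - i))
            * (1 / (1 + (1/ρ - 1) / ε ^ j)) :=
  false_policy_loss_general μ ε hε V hV0 hVs n ρ hρ
end
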